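/- arXiv:2603.12779 — 2 statements merged into one kernel-verified Lean document; each statement's English description precedes it below -/
import Mathlib

section
/- Let P : [0,1]² → ℝ^{m×m} be continuous with P(z,ζ) strictly lower triangular for all (z,ζ). Then the Fredholm operator (𝒯f)(z) = f(z) + ∫₀¹ P(z,ζ) f(ζ) dζ on C([0,1]; ℝ^m) is invertible, and its inverse is of the same form I + integral operator with a strictly lower triangular kernel. -/
open Set intervalIntegral MeasureTheory

attribute [local instance] Matrix.normedAddCommGroup Matrix.normedSpace

set_option maxHeartbeats 1000000

namespace Stmt5Aux

variable {m : ℕ}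

abbrev M (m : ℕ) := Matrix (Fin m) (Fin m) ℝ

instance : CompleteSpace (M m) := (inferInstance : CompleteSpace (Fin m → Fin m → ℝ))

instance : ENormedAddCommMonoid (M m) :=
  @NormedAddCommGroup.toENormedAddCommMonoid _ Matrix.normedAddCommGroup

/-- Fubini for interval integrals over `[0,1]²` of continuous integrands. -/
lemma swap01 {E : Type*} [NormedAddCommGroup E] [NormedSpace ℝ E]
    (F : ℝ → ℝ → E) (hF : Continuous fun p : ℝ × ℝ => F p.1 p.2) :
    ∫ t in (0:ℝ)..1, ∫ s in (0:ℝ)..1, F t s = ∫ s in (0:ℝ)..1, ∫ t in (0:ℝ)..1, F t s := by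
  have hInt : Integrable (Function.uncurry F)
      ((volume.restrict (Ioc (0:ℝ) 1)).prod (volume.restrict (Ioc (0:ℝ) 1))) := by
    rw [Measure.prod_restrict, ← Measure.volume_eq_prod]
    exact (hF.continuousOn.integrableOn_compact (isCompact_Icc.prod isCompact_Icc)).mono_set
      (prod_mono Ioc_subset_Icc_self Ioc_subset_Icc_self)
  simp_rw [intervalIntegral.integral_of_le (zero_le_one (α := ℝ))]
  exact MeasureTheory.integral_integral_swap hInt

noncomputable def kcomp (A B : ℝ → ℝ → M m) : ℝ → ℝ → M m :=
  fun z ζ => ∫ t in (0:ℝ)..1, A z t * B t ζ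

noncomputable def kiter (P : ℝ → ℝ → M m) : ℕ → ℝ → ℝ → M m
  | 0 => P
  | n + 1 => kcomp (kiter P n) P

lemma kcomp_cont {A B : ℝ → ℝ → M m} (hA : Continuous fun p : ℝ × ℝ => A p.1 p.2)
    (hB : Continuous fun p : ℝ × ℝ => B p.1 p.2) :
    Continuous fun p : ℝ × ℝ => kcomp A B p.1 p.2 := by
  apply intervalIntegral.continuous_parametric_intervalIntegral_of_continuous'
    (f := fun (p : ℝ × ℝ) t => A p.1 t * B t p.2) (μ := volume) ?_ 0 1
  show Continuous fun q : (ℝ × ℝ) × ℝ => A q.1.1 q.2 * B q.2 q.1.2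
  exact (hA.comp (continuous_fst.fst.prodMk continuous_snd)).matrix_mul
    (hB.comp (continuous_snd.prodMk continuous_fst.snd))

lemma kiter_cont {P : ℝ → ℝ → M m} (hP : Continuous fun p : ℝ × ℝ => P p.1 p.2) :
    ∀ n, Continuous fun p : ℝ × ℝ => kiter P n p.1 p.2
  | 0 => hP
  | n + 1 => kcomp_cont (kiter_cont hP n) hP


/-- entry evaluation as a continuous linear map -/
noncomputable def entryCLM (i j : Fin m) : M m →L[ℝ] ℝ :=
  LinearMap.toContinuousLinearMap
    { toFun := fun X => X i j, map_add' := fun _ _ => rfl, map_smul' := fun _ _ => rfl }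

@[simp] lemma entryCLM_apply (i j : Fin m) (X : M m) : entryCLM i j X = X i j := rfl

/-- `Tri n A` : entries `(i,j)` of `A` vanish whenever `i < j + n`. -/
def Tri (n : ℕ) (A : ℝ → ℝ → M m) : Prop :=
  ∀ z ζ (i j : Fin m), (i : ℕ) < (j : ℕ) + n → A z ζ i j = 0

lemma Tri.mono {n n' : ℕ} (h : n' ≤ n) {A : ℝ → ℝ → M m} (hA : Tri n A) : Tri n' A :=
  fun z ζ i j hij => hA z ζ i j (hij.trans_le (by omega))

lemma kcomp_entry {A B : ℝ → ℝ → M m} (hA : Continuous fun p : ℝ × ℝ => A p.1 p.2)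
    (hB : Continuous fun p : ℝ × ℝ => B p.1 p.2) (z ζ : ℝ) (i j : Fin m) :
    kcomp A B z ζ i j = ∫ t in (0:ℝ)..1, (A z t * B t ζ) i j := by
  have hint : IntervalIntegrable (fun t => A z t * B t ζ) volume 0 1 := by
    refine Continuous.intervalIntegrable ?_ _ _
    exact (hA.comp (by fun_prop : Continuous fun t : ℝ => ((z, t) : ℝ × ℝ))).matrix_mul
      (hB.comp (by fun_prop : Continuous fun t : ℝ => ((t, ζ) : ℝ × ℝ)))
  have := (entryCLM i j).intervalIntegral_comp_comm hint
  exact this.symm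

lemma kcomp_tri {a : ℕ} {A B : ℝ → ℝ → M m}
    (hA : Continuous fun p : ℝ × ℝ => A p.1 p.2)
    (hB : Continuous fun p : ℝ × ℝ => B p.1 p.2)
    (hAt : Tri a A) (hBt : Tri 1 B) : Tri (a + 1) (kcomp A B) := by
  intro z ζ i j hij
  rw [kcomp_entry hA hB]
  have : ∀ t : ℝ, (A z t * B t ζ) i j = 0 := by
    intro t
    rw [Matrix.mul_apply]
    refine Finset.sum_eq_zero fun k _ => ?_
    by_cases hk : (i : ℕ) < (k : ℕ) + a
    · rw [hAt z t i k hk, zero_mul]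
    · rw [hBt t ζ k j (by omega), mul_zero]
  simp [this]

lemma kiter_tri {P : ℝ → ℝ → M m} (hP : Continuous fun p : ℝ × ℝ => P p.1 p.2)
    (hPt : Tri 1 P) : ∀ n, Tri (n + 1) (kiter P n)
  | 0 => hPt
  | n + 1 => kcomp_tri (kiter_cont hP n) hP (kiter_tri hP hPt n) hPt

lemma tri_zero {n : ℕ} (hn : m ≤ n) {A : ℝ → ℝ → M m} (hA : Tri n A) :
    ∀ z ζ, A z ζ = 0 := by
  intro z ζ
  ext i j
  simpa using hA z ζ i j (by have := i.isLt; omega)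


noncomputable def Lker (P : ℝ → ℝ → M m) : ℝ → ℝ → M m :=
  fun z ζ => ∑ k ∈ Finset.range m, (-1 : ℝ) ^ (k + 1) • kiter P k z ζ

lemma Lker_cont {P : ℝ → ℝ → M m} (hP : Continuous fun p : ℝ × ℝ => P p.1 p.2) :
    Continuous fun p : ℝ × ℝ => Lker P p.1 p.2 := by
  unfold Lker
  exact continuous_finset_sum _ fun k _ => Continuous.smul (f := fun _ : ℝ × ℝ => (-1:ℝ)^(k+1))
    (g := fun p : ℝ × ℝ => kiter P k p.1 p.2) continuous_const (kiter_cont hP k)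

lemma Lker_tri {P : ℝ → ℝ → M m} (hP : Continuous fun p : ℝ × ℝ => P p.1 p.2)
    (hPt : Tri 1 P) : Tri 1 (Lker P) := by
  intro z ζ i j hij
  unfold Lker
  rw [Matrix.sum_apply]
  refine Finset.sum_eq_zero fun k _ => ?_
  have := (kiter_tri hP hPt k).mono (Nat.le_add_left 1 k) z ζ i j hij
  simp [this]

/-- interval integrability of a kernel slice -/
lemma slice_ii {A B : ℝ → ℝ → M m} (hA : Continuous fun p : ℝ × ℝ => A p.1 p.2)
    (hB : Continuous fun p : ℝ × ℝ => B p.1 p.2) (z ζ : ℝ) :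
    IntervalIntegrable (fun t => A z t * B t ζ) volume 0 1 := by
  refine Continuous.intervalIntegrable ?_ _ _
  exact (hA.comp (by fun_prop : Continuous fun t : ℝ => ((z, t) : ℝ × ℝ))).matrix_mul
    (hB.comp (by fun_prop : Continuous fun t : ℝ => ((t, ζ) : ℝ × ℝ)))

lemma kiter_succ (P : ℝ → ℝ → M m) (n : ℕ) : kiter P (n + 1) = kcomp (kiter P n) P := rfl

/-- `kcomp (Lker P) P = ∑ c_k • kiter P (k+1)` -/
lemma kcomp_Lker_left {P : ℝ → ℝ → M m} (hP : Continuous fun p : ℝ × ℝ => P p.1 p.2)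
    (z ζ : ℝ) :
    kcomp (Lker P) P z ζ = ∑ k ∈ Finset.range m, (-1 : ℝ) ^ (k + 1) • kiter P (k + 1) z ζ := by
  have h1 : ∀ t : ℝ,
      Lker P z t * P t ζ
      = ∑ k ∈ Finset.range m, (-1 : ℝ) ^ (k + 1) • (kiter P k z t * P t ζ) := by
    intro t
    rw [Lker, Finset.sum_mul]
    exact Finset.sum_congr rfl fun k _ => smul_mul_assoc _ _ _
  rw [kcomp]
  rw [intervalIntegral.integral_congr (g := fun t =>
      ∑ k ∈ Finset.range m, (-1 : ℝ) ^ (k + 1) • (kiter P k z t * P t ζ))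
      (fun t _ => h1 t)]
  rw [intervalIntegral.integral_finset_sum]
  · refine Finset.sum_congr rfl fun k _ => ?_
    rw [intervalIntegral.integral_smul, kiter_succ, kcomp]
  · intro k _
    exact IntervalIntegrable.smul (R := ℝ) (slice_ii (kiter_cont hP k) hP z ζ) _

/-- Left Neumann identity: `P + L + L∘P = 0`. -/
lemma neumann_left {P : ℝ → ℝ → M m} (hP : Continuous fun p : ℝ × ℝ => P p.1 p.2)
    (hPt : Tri 1 P) (z ζ : ℝ) :
    P z ζ + Lker P z ζ + kcomp (Lker P) P z ζ = 0 := by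
  rw [kcomp_Lker_left hP]
  set a : ℕ → M m := fun k => (-1 : ℝ) ^ (k + 1) • kiter P k z ζ with ha
  have hL : Lker P z ζ = ∑ k ∈ Finset.range m, a k := rfl
  have hshift : ∀ k, (-1 : ℝ) ^ (k + 1) • kiter P (k + 1) z ζ = -a (k + 1) := by
    intro k
    rw [ha]
    simp [pow_succ, neg_smul]
  rw [hL]
  simp_rw [hshift]
  have ham : a m = 0 := by
    rw [ha]
    simp [tri_zero (Nat.le_succ m) (kiter_tri hP hPt m) z ζ]
  have ha0 : a 0 = -(P z ζ) := by
    rw [ha]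
    show (-1 : ℝ) ^ 1 • kiter P 0 z ζ = _
    simp [kiter]
  have h1 := Finset.sum_range_succ' a m
  have h2 := Finset.sum_range_succ a m
  have hsh : ∑ k ∈ Finset.range m, a (k + 1)
      = ∑ k ∈ Finset.range m, a k + a m - a 0 := by
    rw [← h2, h1]
    abel
  rw [Finset.sum_neg_distrib, hsh, ham, ha0]
  abel


noncomputable def mulLeftCLM (A : M m) : M m →L[ℝ] M m :=
  LinearMap.toContinuousLinearMap (LinearMap.mulLeft ℝ A)

noncomputable def mulRightCLM (C : M m) : M m →L[ℝ] M m :=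
  LinearMap.toContinuousLinearMap (LinearMap.mulRight ℝ C)

@[simp] lemma mulLeftCLM_apply (A X : M m) : mulLeftCLM A X = A * X := rfl
@[simp] lemma mulRightCLM_apply (C X : M m) : mulRightCLM C X = X * C := rfl

lemma kcomp_assoc {A B C : ℝ → ℝ → M m}
    (hA : Continuous fun p : ℝ × ℝ => A p.1 p.2)
    (hB : Continuous fun p : ℝ × ℝ => B p.1 p.2)
    (hC : Continuous fun p : ℝ × ℝ => C p.1 p.2) (z ζ : ℝ) :
    kcomp A (kcomp B C) z ζ = kcomp (kcomp A B) C z ζ := by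
  have h1 : ∀ t : ℝ, A z t * kcomp B C t ζ
      = ∫ s in (0:ℝ)..1, A z t * (B t s * C s ζ) := by
    intro t
    have := (mulLeftCLM (A z t)).intervalIntegral_comp_comm (slice_ii hB hC t ζ)
    exact this.symm
  have h2 : ∀ s : ℝ, kcomp A B z s * C s ζ
      = ∫ t in (0:ℝ)..1, (A z t * B t s) * C s ζ := by
    intro s
    have := (mulRightCLM (C s ζ)).intervalIntegral_comp_comm (slice_ii hA hB z s)
    exact this.symm
  calc kcomp A (kcomp B C) z ζ
      = ∫ t in (0:ℝ)..1, ∫ s in (0:ℝ)..1, A z t * (B t s * C s ζ) := by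
        rw [kcomp]; exact intervalIntegral.integral_congr fun t _ => h1 t
    _ = ∫ s in (0:ℝ)..1, ∫ t in (0:ℝ)..1, A z t * (B t s * C s ζ) := by
        apply swap01 (fun t s => A z t * (B t s * C s ζ))
        exact (hA.comp (by fun_prop : Continuous fun p : ℝ × ℝ => ((z, p.1) : ℝ × ℝ))).matrix_mul
          ((hB.matrix_mul (hC.comp (by fun_prop :
            Continuous fun p : ℝ × ℝ => ((p.2, ζ) : ℝ × ℝ)))))
    _ = ∫ s in (0:ℝ)..1, ∫ t in (0:ℝ)..1, (A z t * B t s) * C s ζ := by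
        simp_rw [mul_assoc]
    _ = kcomp (kcomp A B) C z ζ := by
        rw [kcomp]; exact intervalIntegral.integral_congr fun s _ => (h2 s).symm

lemma kcomp_P_iter {P : ℝ → ℝ → M m} (hP : Continuous fun p : ℝ × ℝ => P p.1 p.2)
    (n : ℕ) : kcomp P (kiter P n) = kiter P (n + 1) := by
  induction n with
  | zero => rfl
  | succ n ih =>
    funext z ζ
    calc kcomp P (kiter P (n + 1)) z ζ
        = kcomp P (kcomp (kiter P n) P) z ζ := rfl
      _ = kcomp (kcomp P (kiter P n)) P z ζ := kcomp_assoc hP (kiter_cont hP n) hP z ζ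
      _ = kcomp (kiter P (n + 1)) P z ζ := by rw [ih]
      _ = kiter P (n + 2) z ζ := rfl

lemma kcomp_Lker_right {P : ℝ → ℝ → M m} (hP : Continuous fun p : ℝ × ℝ => P p.1 p.2)
    (z ζ : ℝ) :
    kcomp P (Lker P) z ζ = ∑ k ∈ Finset.range m, (-1 : ℝ) ^ (k + 1) • kiter P (k + 1) z ζ := by
  have h1 : ∀ t : ℝ,
      P z t * Lker P t ζ
      = ∑ k ∈ Finset.range m, (-1 : ℝ) ^ (k + 1) • (P z t * kiter P k t ζ) := by
    intro t
    rw [Lker, Finset.mul_sum]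
    exact Finset.sum_congr rfl fun k _ => (mul_smul_comm _ _ _)
  rw [kcomp]
  rw [intervalIntegral.integral_congr (g := fun t =>
      ∑ k ∈ Finset.range m, (-1 : ℝ) ^ (k + 1) • (P z t * kiter P k t ζ))
      (fun t _ => h1 t)]
  rw [intervalIntegral.integral_finset_sum]
  · refine Finset.sum_congr rfl fun k _ => ?_
    rw [intervalIntegral.integral_smul, ← kcomp_P_iter hP k, kcomp]
  · intro k _
    exact IntervalIntegrable.smul (R := ℝ) (slice_ii hP (kiter_cont hP k) z ζ) _

/-- Right Neumann identity: `P + L + P∘L = 0`. -/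
lemma neumann_right {P : ℝ → ℝ → M m} (hP : Continuous fun p : ℝ × ℝ => P p.1 p.2)
    (hPt : Tri 1 P) (z ζ : ℝ) :
    P z ζ + Lker P z ζ + kcomp P (Lker P) z ζ = 0 := by
  rw [kcomp_Lker_right hP, ← kcomp_Lker_left hP]
  exact neumann_left hP hPt z ζ


noncomputable def mulVecCLM (A : M m) : (Fin m → ℝ) →L[ℝ] (Fin m → ℝ) :=
  LinearMap.toContinuousLinearMap A.mulVecLin

noncomputable def mulVecRightCLM (v : Fin m → ℝ) : M m →L[ℝ] (Fin m → ℝ) :=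
  LinearMap.toContinuousLinearMap
    { toFun := fun A : M m => A.mulVec v
      map_add' := fun A B => Matrix.add_mulVec A B v
      map_smul' := fun c A => by simp [Matrix.smul_mulVec] }

@[simp] lemma mulVecCLM_apply (A : M m) (v : Fin m → ℝ) : mulVecCLM A v = A.mulVec v := rfl
@[simp] lemma mulVecRightCLM_apply (v : Fin m → ℝ) (A : M m) :
    mulVecRightCLM v A = A.mulVec v := rfl

lemma sliceV_ii {A : ℝ → ℝ → M m} (hA : Continuous fun p : ℝ × ℝ => A p.1 p.2)
    {f : ℝ → Fin m → ℝ} (hf : Continuous f) (z : ℝ) :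
    IntervalIntegrable (fun ζ => (A z ζ).mulVec (f ζ)) volume 0 1 := by
  refine Continuous.intervalIntegrable ?_ _ _
  exact (hA.comp (by fun_prop : Continuous fun t : ℝ => ((z, t) : ℝ × ℝ))).matrix_mulVec hf

/-- the core computation: if `A + B + B∘A = 0` then
`(I + B)` is a left inverse of `(I + A)` on continuous functions. -/
lemma inverse_identity {A B : ℝ → ℝ → M m}
    (hA : Continuous fun p : ℝ × ℝ => A p.1 p.2)
    (hB : Continuous fun p : ℝ × ℝ => B p.1 p.2)
    (hker : ∀ z ζ, A z ζ + B z ζ + kcomp B A z ζ = 0)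
    (f : ℝ → Fin m → ℝ) (hf : Continuous f) (z : ℝ) :
    f z = (f z + ∫ ζ in (0:ℝ)..1, (A z ζ).mulVec (f ζ))
      + ∫ ζ in (0:ℝ)..1, (B z ζ).mulVec (f ζ + ∫ ζ' in (0:ℝ)..1, (A ζ ζ').mulVec (f ζ')) := by
  set g : ℝ → Fin m → ℝ := fun ζ => ∫ ζ' in (0:ℝ)..1, (A ζ ζ').mulVec (f ζ') with hgdef
  have hg : Continuous g := by
    apply intervalIntegral.continuous_parametric_intervalIntegral_of_continuous'
      (f := fun (ζ : ℝ) ζ' => (A ζ ζ').mulVec (f ζ')) (μ := volume) ?_ 0 1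
    show Continuous fun q : ℝ × ℝ => (A q.1 q.2).mulVec (f q.2)
    exact hA.matrix_mulVec (hf.comp continuous_snd)
  have hBg : ∀ ζ : ℝ, (B z ζ).mulVec (g ζ)
      = ∫ ζ' in (0:ℝ)..1, (B z ζ * A ζ ζ').mulVec (f ζ') := by
    intro ζ
    have h := (mulVecCLM (B z ζ)).intervalIntegral_comp_comm (sliceV_ii hA hf ζ)
    rw [hgdef]
    simp only [mulVecCLM_apply] at h
    rw [← h]
    exact intervalIntegral.integral_congr fun ζ' _ => Matrix.mulVec_mulVec _ _ _
  have hswap : ∫ ζ in (0:ℝ)..1, ∫ ζ' in (0:ℝ)..1, (B z ζ * A ζ ζ').mulVec (f ζ')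
      = ∫ ζ' in (0:ℝ)..1, ∫ ζ in (0:ℝ)..1, (B z ζ * A ζ ζ').mulVec (f ζ') := by
    apply swap01 (fun ζ ζ' => (B z ζ * A ζ ζ').mulVec (f ζ'))
    exact ((hB.comp (by fun_prop : Continuous fun p : ℝ × ℝ =>
      ((z, p.1) : ℝ × ℝ))).matrix_mul hA).matrix_mulVec (hf.comp continuous_snd)
  have hinner : ∀ ζ' : ℝ, (∫ ζ in (0:ℝ)..1, (B z ζ * A ζ ζ').mulVec (f ζ'))
      = (kcomp B A z ζ').mulVec (f ζ') := by
    intro ζ'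
    have h := (mulVecRightCLM (f ζ')).intervalIntegral_comp_comm (slice_ii hB hA z ζ')
    exact h
  have hBgInt : ∫ ζ in (0:ℝ)..1, (B z ζ).mulVec (g ζ)
      = ∫ ζ' in (0:ℝ)..1, (kcomp B A z ζ').mulVec (f ζ') := by
    rw [intervalIntegral.integral_congr (g := fun ζ =>
        ∫ ζ' in (0:ℝ)..1, (B z ζ * A ζ ζ').mulVec (f ζ')) (fun ζ _ => hBg ζ), hswap]
    exact intervalIntegral.integral_congr fun ζ' _ => hinner ζ'
  have hsplit : ∫ ζ in (0:ℝ)..1, (B z ζ).mulVec (f ζ + g ζ)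
      = (∫ ζ in (0:ℝ)..1, (B z ζ).mulVec (f ζ)) + ∫ ζ in (0:ℝ)..1, (B z ζ).mulVec (g ζ) := by
    simp_rw [Matrix.mulVec_add]
    exact intervalIntegral.integral_add (sliceV_ii hB hf z) (sliceV_ii hB hg z)
  have hzero : (∫ ζ in (0:ℝ)..1, (A z ζ).mulVec (f ζ))
      + ((∫ ζ in (0:ℝ)..1, (B z ζ).mulVec (f ζ))
        + ∫ ζ in (0:ℝ)..1, (kcomp B A z ζ).mulVec (f ζ)) = 0 := by
    rw [← intervalIntegral.integral_add (sliceV_ii hB hf z)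
      (sliceV_ii (kcomp_cont hB hA) hf z)]
    rw [← intervalIntegral.integral_add (sliceV_ii hA hf z)
      ((sliceV_ii hB hf z).add (sliceV_ii (kcomp_cont hB hA) hf z))]
    have : ∀ ζ : ℝ, (A z ζ).mulVec (f ζ) + ((B z ζ).mulVec (f ζ)
        + (kcomp B A z ζ).mulVec (f ζ)) = 0 := by
      intro ζ
      rw [← Matrix.add_mulVec, ← Matrix.add_mulVec, ← add_assoc, hker z ζ]
      simp
    simp [this]
  rw [hsplit, hBgInt, add_assoc, hzero, add_zero]

end Stmt5Aux

open Stmt5Aux in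
/-- The Fredholm operator `f ↦ f + ∫₀¹ P(·,ζ)f(ζ)dζ` with a continuous strictly lower
triangular kernel is invertible on `C([0,1];ℝ^m)`, with inverse of the same form with
a continuous strictly lower triangular kernel. -/
theorem stmt5 (m : ℕ) (P : ℝ → ℝ → Matrix (Fin m) (Fin m) ℝ)
    (hPc : ContinuousOn (fun p : ℝ × ℝ => P p.1 p.2) (Icc 0 1 ×ˢ Icc 0 1))
    (hPlt : ∀ z ∈ Icc (0:ℝ) 1, ∀ ζ ∈ Icc (0:ℝ) 1, ∀ i j : Fin m, i ≤ j → P z ζ i j = 0) :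
    ∃ L : ℝ → ℝ → Matrix (Fin m) (Fin m) ℝ,
      ContinuousOn (fun p : ℝ × ℝ => L p.1 p.2) (Icc 0 1 ×ˢ Icc 0 1) ∧
      (∀ z ∈ Icc (0:ℝ) 1, ∀ ζ ∈ Icc (0:ℝ) 1, ∀ i j : Fin m, i ≤ j → L z ζ i j = 0) ∧
      (∀ f : ℝ → Fin m → ℝ, ContinuousOn f (Icc 0 1) → ∀ z ∈ Icc (0:ℝ) 1,
        f z = (f z + ∫ ζ in (0:ℝ)..1, (P z ζ).mulVec (f ζ))
          + ∫ ζ in (0:ℝ)..1,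
              (L z ζ).mulVec (f ζ + ∫ ζ' in (0:ℝ)..1, (P ζ ζ').mulVec (f ζ'))) ∧
      (∀ g : ℝ → Fin m → ℝ, ContinuousOn g (Icc 0 1) → ∀ z ∈ Icc (0:ℝ) 1,
        g z = (g z + ∫ ζ in (0:ℝ)..1, (L z ζ).mulVec (g ζ))
          + ∫ ζ in (0:ℝ)..1,
              (P z ζ).mulVec (g ζ + ∫ ζ' in (0:ℝ)..1, (L ζ ζ').mulVec (g ζ'))) := by
  -- a continuous everywhere-defined version of `P`
  set π : ℝ → ℝ := fun t => (projIcc (0:ℝ) 1 zero_le_one t : ℝ) with hπdef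
  have hπc : Continuous π := continuous_subtype_val.comp continuous_projIcc
  have hπmem : ∀ t, π t ∈ Icc (0:ℝ) 1 := fun t => Subtype.coe_prop _
  have hπeq : ∀ t ∈ Icc (0:ℝ) 1, π t = t := fun t ht => by
    rw [hπdef]; simp [projIcc_of_mem zero_le_one ht]
  set Pt : ℝ → ℝ → M m := fun z ζ => P (π z) (π ζ) with hPtdef
  have hPtc : Continuous fun p : ℝ × ℝ => Pt p.1 p.2 :=
    hPc.comp_continuous ((hπc.comp continuous_fst).prodMk (hπc.comp continuous_snd))
      (fun p => ⟨hπmem p.1, hπmem p.2⟩)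
  have hPttri : Tri 1 Pt := by
    intro z ζ i j hij
    exact hPlt _ (hπmem z) _ (hπmem ζ) i j (by omega)
  have hPteq : ∀ z ∈ Icc (0:ℝ) 1, ∀ ζ ∈ Icc (0:ℝ) 1, Pt z ζ = P z ζ := by
    intro z hz ζ hζ
    rw [hPtdef]
    simp only []
    rw [hπeq z hz, hπeq ζ hζ]
  have hLc := Lker_cont hPtc
  have hLtri := Lker_tri hPtc hPttri
  refine ⟨Lker Pt, hLc.continuousOn, ?_, ?_, ?_⟩
  · intro z _ ζ _ i j hij
    exact hLtri z ζ i j (by omega)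
  · -- left inverse identity
    intro f hf z hz
    set f' : ℝ → Fin m → ℝ := fun t => f (π t) with hf'def
    have hf'c : Continuous f' := hf.comp_continuous hπc hπmem
    have hf'eq : ∀ t ∈ Icc (0:ℝ) 1, f' t = f t := fun t ht => by
      rw [hf'def]; simp only []; rw [hπeq t ht]
    have key := inverse_identity hPtc hLc (neumann_left hPtc hPttri) f' hf'c z
    have h1 : ∫ ζ in (0:ℝ)..1, (P z ζ).mulVec (f ζ)
        = ∫ ζ in (0:ℝ)..1, (Pt z ζ).mulVec (f' ζ) := by
      refine intervalIntegral.integral_congr fun t ht => ?_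
      rw [uIcc_of_le zero_le_one] at ht
      rw [hPteq z hz t ht, hf'eq t ht]
    have hin : ∀ ζ ∈ Icc (0:ℝ) 1, (∫ ζ' in (0:ℝ)..1, (P ζ ζ').mulVec (f ζ'))
        = ∫ ζ' in (0:ℝ)..1, (Pt ζ ζ').mulVec (f' ζ') := by
      intro ζ hζ
      refine intervalIntegral.integral_congr fun t ht => ?_
      rw [uIcc_of_le zero_le_one] at ht
      rw [hPteq ζ hζ t ht, hf'eq t ht]
    have h2 : ∫ ζ in (0:ℝ)..1, (Lker Pt z ζ).mulVec
          (f ζ + ∫ ζ' in (0:ℝ)..1, (P ζ ζ').mulVec (f ζ'))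
        = ∫ ζ in (0:ℝ)..1, (Lker Pt z ζ).mulVec
          (f' ζ + ∫ ζ' in (0:ℝ)..1, (Pt ζ ζ').mulVec (f' ζ')) := by
      refine intervalIntegral.integral_congr fun t ht => ?_
      rw [uIcc_of_le zero_le_one] at ht
      rw [hf'eq t ht, hin t ht]
    rw [h1, h2, ← hf'eq z hz]
    exact key
  · -- right inverse identity
    intro g hg z hz
    set g' : ℝ → Fin m → ℝ := fun t => g (π t) with hg'def
    have hg'c : Continuous g' := hg.comp_continuous hπc hπmem
    have hg'eq : ∀ t ∈ Icc (0:ℝ) 1, g' t = g t := fun t ht => by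
      rw [hg'def]; simp only []; rw [hπeq t ht]
    have hker : ∀ z ζ : ℝ, Lker Pt z ζ + Pt z ζ + kcomp Pt (Lker Pt) z ζ = 0 := by
      intro z ζ
      rw [show Lker Pt z ζ + Pt z ζ = Pt z ζ + Lker Pt z ζ from add_comm _ _]
      exact neumann_right hPtc hPttri z ζ
    have key := inverse_identity hLc hPtc hker g' hg'c z
    have h1 : ∫ ζ in (0:ℝ)..1, (Lker Pt z ζ).mulVec (g ζ)
        = ∫ ζ in (0:ℝ)..1, (Lker Pt z ζ).mulVec (g' ζ) := by
      refine intervalIntegral.integral_congr fun t ht => ?_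
      rw [uIcc_of_le zero_le_one] at ht
      rw [hg'eq t ht]
    have hin : ∀ ζ ∈ Icc (0:ℝ) 1, (∫ ζ' in (0:ℝ)..1, (Lker Pt ζ ζ').mulVec (g ζ'))
        = ∫ ζ' in (0:ℝ)..1, (Lker Pt ζ ζ').mulVec (g' ζ') := by
      intro ζ hζ
      refine intervalIntegral.integral_congr fun t ht => ?_
      rw [uIcc_of_le zero_le_one] at ht
      rw [hg'eq t ht]
    have h2 : ∫ ζ in (0:ℝ)..1, (Pt z ζ).mulVec
          (g ζ + ∫ ζ' in (0:ℝ)..1, (Lker Pt ζ ζ').mulVec (g ζ'))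
        = ∫ ζ in (0:ℝ)..1, (Pt z ζ).mulVec
          (g' ζ + ∫ ζ' in (0:ℝ)..1, (Lker Pt ζ ζ').mulVec (g' ζ')) := by
      refine intervalIntegral.integral_congr fun t ht => ?_
      rw [uIcc_of_le zero_le_one] at ht
      rw [hg'eq t ht, hin t ht]
    have h3 : ∫ ζ in (0:ℝ)..1, (P z ζ).mulVec
          (g ζ + ∫ ζ' in (0:ℝ)..1, (Lker Pt ζ ζ').mulVec (g ζ'))
        = ∫ ζ in (0:ℝ)..1, (Pt z ζ).mulVec
          (g ζ + ∫ ζ' in (0:ℝ)..1, (Lker Pt ζ ζ').mulVec (g ζ')) := by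
      refine intervalIntegral.integral_congr fun t ht => ?_
      rw [uIcc_of_le zero_le_one] at ht
      rw [hPteq z hz t ht]
    rw [h1, h3, h2, ← hg'eq z hz]
    exact key
end

section
/- Let λ : [0,1] → ℝ be continuous and strictly positive, A₀ : [0,1] → ℝ piecewise continuous, and consider the scalar kernel equation λ(z)∂_z p(z,ζ) + ∂_ζ(p(z,ζ)λ(ζ)) = 0 on [0,1]² with boundary conditions p(z,0)λ(0) = A₀(z) and p(0,ζ) = 0. Then a piecewise continuous solution exists and is given explicitly along characteristics: p(z,ζ) = A₀(ψ(φ(z) − φ(ζ)))/λ(ζ) for φ(z) ≥ φ(ζ), and p(z,ζ) = 0 otherwise, where φ(z) = ∫₀^z ds/λ(s) and ψ = φ⁻¹. -/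
open Set intervalIntegral

/-- Inverse of a continuous function on a compact set of reals is continuous on the image. -/
lemma inv_continuousOn {s : Set ℝ} {f g : ℝ → ℝ} (hs : IsCompact s)
    (hf : ContinuousOn f s) (hg : ∀ x ∈ s, g (f x) = x) :
    ContinuousOn g (f '' s) := by
  have : CompactSpace s := isCompact_iff_compactSpace.mp hs
  have hF : Continuous (s.restrict f) := continuousOn_iff_continuous_restrict.mp hf
  have hFinj : Function.Injective (s.restrict f) := by
    intro x y h
    simp only [Set.restrict, Set.domRestrict_apply] at h
    exact Subtype.ext (by rw [← hg x.1 x.2, ← hg y.1 y.2, h])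
  have hemb := (hF.isClosedEmbedding hFinj).toIsEmbedding
  let e : s ≃ₜ Set.range (s.restrict f) := hemb.toHomeomorph
  have hrange : Set.range (s.restrict f) = f '' s := Set.range_restrict f s
  let e' : (f '' s : Set ℝ) ≃ₜ s := (Homeomorph.setCongr hrange.symm).trans e.symm
  rw [continuousOn_iff_continuous_restrict]
  have heq : (f '' s).domRestrict g = fun t => (e' t : ℝ) := by
    funext t
    have hx : (e' t : ℝ) ∈ s := (e' t).2
    have hft : f ((e' t : ℝ)) = (t : ℝ) := by
      have h1 := Equiv.apply_ofInjective_symm hFinj ((Homeomorph.setCongr hrange.symm) t)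
      simp only [Set.restrict, Set.domRestrict_apply] at h1; exact h1
    simp only [Set.domRestrict_apply, ← hft, hg _ hx]
  rw [heq]
  exact continuous_subtype_val.comp e'.continuous

/-- The scalar Fredholm kernel equation `λ(z)∂_z p + ∂_ζ(pλ) = 0` with
`p(z,0)λ(0) = A₀(z)` and `p(0,ζ) = 0` has the explicit characteristic solution
`p(z,ζ) = A₀(ψ(φ(z) − φ(ζ)))/λ(ζ)` for `φ(z) ≥ φ(ζ)` and `p = 0` otherwise: this `p`
satisfies both boundary conditions, `p(z,ζ)λ(ζ)` is constant along the characteristics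
`φ(z) − φ(ζ) = const`, and `p` is continuous on the triangle `{ζ ≤ z}`. -/
theorem stmt19 (lam : ℝ → ℝ) (hc : ContinuousOn lam (Icc 0 1))
    (hpos : ∀ z ∈ Icc (0:ℝ) 1, 0 < lam z)
    (A₀ : ℝ → ℝ) (hA : ContinuousOn A₀ (Icc 0 1))
    (ψ : ℝ → ℝ) (hψ : ∀ z ∈ Icc (0:ℝ) 1, ψ (∫ s in (0:ℝ)..z, 1 / lam s) = z) :
    let φ : ℝ → ℝ := fun z => ∫ s in (0:ℝ)..z, 1 / lam s
    let p : ℝ → ℝ → ℝ := fun z ζ =>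
      if φ ζ ≤ φ z then A₀ (ψ (φ z - φ ζ)) / lam ζ else 0
    (∀ z ∈ Icc (0:ℝ) 1, p z 0 * lam 0 = A₀ z) ∧
    (∀ ζ ∈ Icc (0:ℝ) 1, 0 < ζ → p 0 ζ = 0) ∧
    (∀ z ∈ Icc (0:ℝ) 1, ∀ ζ ∈ Icc (0:ℝ) 1, ∀ z' ∈ Icc (0:ℝ) 1, ∀ ζ' ∈ Icc (0:ℝ) 1,
      φ z - φ ζ = φ z' - φ ζ' → p z ζ * lam ζ = p z' ζ' * lam ζ') ∧
    ContinuousOn (fun q : ℝ × ℝ => p q.1 q.2)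
      {q : ℝ × ℝ | 0 ≤ q.2 ∧ q.2 ≤ q.1 ∧ q.1 ≤ 1} := by
  intro φ p
  have hne : ∀ z ∈ Icc (0:ℝ) 1, lam z ≠ 0 := fun z hz => (hpos z hz).ne'
  have hinv_cont : ContinuousOn (fun s => 1 / lam s) (Icc 0 1) :=
    continuousOn_const.div hc hne
  have hint : ∀ a ∈ Icc (0:ℝ) 1, ∀ b ∈ Icc (0:ℝ) 1,
      IntervalIntegrable (fun s => 1 / lam s) MeasureTheory.volume a b := by
    intro a ha b hb
    apply ContinuousOn.intervalIntegrable
    apply hinv_cont.mono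
    rw [← uIcc_of_le (zero_le_one' ℝ)]
    exact uIcc_subset_uIcc (by simpa [uIcc_of_le (zero_le_one' ℝ)] using ha)
      (by simpa [uIcc_of_le (zero_le_one' ℝ)] using hb)
  have hφ0 : φ 0 = 0 := intervalIntegral.integral_same
  have hφmono : StrictMonoOn φ (Icc 0 1) := by
    intro a ha b hb hab
    have hsub : φ b - φ a = ∫ s in a..b, 1 / lam s :=
      intervalIntegral.integral_interval_sub_left (hint 0 (left_mem_Icc.2 zero_le_one) b hb)
        (hint 0 (left_mem_Icc.2 zero_le_one) a ha)
    have hpos' : 0 < ∫ s in a..b, 1 / lam s := by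
      apply intervalIntegral.intervalIntegral_pos_of_pos_on (hint a ha b hb) _ hab
      intro x hx
      have hx' : x ∈ Icc (0:ℝ) 1 := ⟨le_trans ha.1 hx.1.le, le_trans hx.2.le hb.2⟩
      have := hpos x hx'
      positivity
    linarith [hsub ▸ hpos']
  have hφle : ∀ a ∈ Icc (0:ℝ) 1, ∀ b ∈ Icc (0:ℝ) 1, a ≤ b → φ a ≤ φ b :=
    fun a ha b hb hab => hφmono.monotoneOn ha hb hab
  have hψφ : ∀ z ∈ Icc (0:ℝ) 1, ψ (φ z) = z := hψ
  have hφcont : ContinuousOn φ (Icc 0 1) := by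
    have h1 : MeasureTheory.IntegrableOn (fun s => 1 / lam s) (uIcc 0 1) := by
      rw [uIcc_of_le (zero_le_one' ℝ)]
      exact hinv_cont.integrableOn_compact isCompact_Icc
    have := intervalIntegral.continuousOn_primitive_interval h1
    rwa [uIcc_of_le (zero_le_one' ℝ)] at this
  refine ⟨?_, ?_, ?_, ?_⟩
  · -- boundary condition p(z,0)λ(0) = A₀(z)
    intro z hz
    have h0 : (0:ℝ) ∈ Icc (0:ℝ) 1 := left_mem_Icc.2 zero_le_one
    have hle : φ 0 ≤ φ z := hφle 0 h0 z hz hz.1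
    simp only [p, if_pos hle, hφ0, sub_zero]
    rw [div_mul_cancel₀ _ (hne 0 h0), hψφ z hz]
  · -- boundary condition p(0,ζ) = 0 for ζ > 0
    intro ζ hζ hζpos
    have hlt : φ 0 < φ ζ := hφmono (left_mem_Icc.2 zero_le_one) hζ hζpos
    simp only [p, if_neg (not_le.2 hlt)]
  · -- constancy along characteristics
    intro z hz ζ hζ z' hz' ζ' hζ' h
    simp only [p]
    by_cases hle : φ ζ ≤ φ z
    · have hle' : φ ζ' ≤ φ z' := by linarith
      rw [if_pos hle, if_pos hle', div_mul_cancel₀ _ (hne ζ hζ),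
        div_mul_cancel₀ _ (hne ζ' hζ'), h]
    · have hle' : ¬ φ ζ' ≤ φ z' := by rw [not_le] at hle ⊢; linarith
      rw [if_neg hle, if_neg hle', zero_mul, zero_mul]
  · -- continuity on the triangle
    set T : Set (ℝ × ℝ) := {q : ℝ × ℝ | 0 ≤ q.2 ∧ q.2 ≤ q.1 ∧ q.1 ≤ 1} with hT
    have hm1 : MapsTo (fun q : ℝ × ℝ => q.1) T (Icc 0 1) := by
      intro q hq; exact ⟨le_trans hq.1 hq.2.1, hq.2.2⟩
    have hm2 : MapsTo (fun q : ℝ × ℝ => q.2) T (Icc 0 1) := by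
      intro q hq; exact ⟨hq.1, le_trans hq.2.1 hq.2.2⟩
    have hf1 : ContinuousOn (fun q : ℝ × ℝ => φ q.1) T :=
      hφcont.comp continuousOn_fst hm1
    have hf2 : ContinuousOn (fun q : ℝ × ℝ => φ q.2) T :=
      hφcont.comp continuousOn_snd hm2
    have hd : ContinuousOn (fun q : ℝ × ℝ => φ q.1 - φ q.2) T := hf1.sub hf2
    have hψcont : ContinuousOn ψ (φ '' Icc 0 1) :=
      inv_continuousOn isCompact_Icc hφcont hψφ
    have hψmaps : MapsTo ψ (φ '' Icc 0 1) (Icc 0 1) := by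
      rintro t ⟨x, hx, rfl⟩
      rw [hψφ x hx]; exact hx
    have hBcont : ContinuousOn (fun t => A₀ (ψ t)) (φ '' Icc 0 1) :=
      hA.comp hψcont hψmaps
    have hdmaps : MapsTo (fun q : ℝ × ℝ => φ q.1 - φ q.2) T (φ '' Icc 0 1) := by
      intro q hq
      have hq1 := hm1 hq
      have hq2 := hm2 hq
      have h21 : φ q.2 ≤ φ q.1 := hφle q.2 hq2 q.1 hq1 hq.2.1
      have h0 : (0:ℝ) ∈ Icc (0:ℝ) 1 := left_mem_Icc.2 zero_le_one
      have h1 : (1:ℝ) ∈ Icc (0:ℝ) 1 := right_mem_Icc.2 zero_le_one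
      have hlow : φ 0 ≤ φ q.1 - φ q.2 := by
        have := hφle 0 h0 q.2 hq2 hq2.1
        linarith
      have hhigh : φ q.1 - φ q.2 ≤ φ 1 := by
        have h1' := hφle q.1 hq1 1 h1 hq1.2
        have h2' := hφle 0 h0 q.2 hq2 hq2.1
        rw [hφ0] at h2'
        linarith
      exact intermediate_value_Icc (zero_le_one' ℝ) hφcont ⟨hlow, hhigh⟩
    have hmain : ContinuousOn (fun q : ℝ × ℝ => A₀ (ψ (φ q.1 - φ q.2)) / lam q.2) T := by
      apply ContinuousOn.div
      · exact hBcont.comp hd hdmaps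
      · exact hc.comp continuousOn_snd hm2
      · intro q hq; exact hne q.2 (hm2 hq)
    apply hmain.congr
    intro q hq
    have h21 : φ q.2 ≤ φ q.1 := hφle q.2 (hm2 hq) q.1 (hm1 hq) hq.2.1
    simp only [p, if_pos h21]
end
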